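/- arXiv:1804.05567 — 2 statements merged into one kernel-verified Lean document; each statement's English description precedes it below -/
import Mathlib

section
/- Let Φ : X → ℝ^d be bounded and measurable, a : ℝ → ℝ continuously differentiable, p a probability measure on X × ℝ with E|y| < ∞, and γ > 0. Suppose π is a probability measure on ℝ^d, with finite first moment, invariant for the SGD recursion for the conditional exponential family: the pushforward of π ⊗ p under (θ, (x,y)) ↦ θ - γ(a'(⟨Φ(x),θ⟩) - y)Φ(x) equals π, and suppose (θ,(x,y)) ↦ (a'(⟨Φ(x),θ⟩) - y)Φ(x) is integrable under π ⊗ p. Then the averaged prediction b(x) = ∫ a'(⟨Φ(x),θ⟩) dπ(θ) satisfies E_{p_x}[ (b(x) - μ**(x)) Φ(x) ] = 0, where μ**(x) = E[y | x]. -/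
open MeasureTheory
open scoped RealInnerProductSpace

/-! The invariance of `π` makes the mean SGD increment vanish, so the population gradient
`E_{π ⊗ p}[(a'(⟨Φ(x),θ⟩) - y) Φ(x)]` is zero. Integrating out `θ` turns its first part
into `E_p[b(x) Φ(x)]`, and the tower property turns its second part into
`E_p[μ**(x) Φ(x)]`. -/

section

variable {Ω E : Type*} {m mΩ : MeasurableSpace Ω} [NormedAddCommGroup E] [NormedSpace ℝ E]

theorem integral_eq_zero_of_map_sub_smul_eq [MeasurableSpace E] [BorelSpace E]
    {ρ : Measure Ω} {F G : Ω → E} {γ : ℝ} (hγ : γ ≠ 0) (hF : Integrable F ρ)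
    (hG : Integrable G ρ) (hmap : ρ.map (fun ω => F ω - γ • G ω) = ρ.map F) :
    ∫ ω, G ω ∂ρ = 0 := by
  have hFG : Integrable (fun ω => F ω - γ • G ω) ρ := hF.sub (hG.smul γ)
  have hmean : ∫ ω, F ω - γ • G ω ∂ρ = ∫ ω, F ω ∂ρ := calc
    _ = ∫ x, x ∂ρ.map (fun ω => F ω - γ • G ω) := (integral_map hFG.aemeasurable
          hFG.aestronglyMeasurable.aestronglyMeasurable_id_map).symm
    _ = ∫ x, x ∂ρ.map F := by rw [hmap]
    _ = ∫ ω, F ω ∂ρ :=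
          integral_map hF.aemeasurable hF.aestronglyMeasurable.aestronglyMeasurable_id_map
  rw [integral_sub (g := fun ω => γ • G ω) hF (hG.smul γ), integral_smul, sub_eq_self,
    smul_eq_zero] at hmean
  exact hmean.resolve_left hγ

theorem integral_smul_eq_integral_condExp_smul [CompleteSpace E] {μ : Measure Ω}
    (hm : m ≤ mΩ) [SigmaFinite (μ.trim hm)] {f : Ω → ℝ} {g : Ω → E}
    (hf : Integrable f μ) (hfg : Integrable (f • g) μ) (hg : AEStronglyMeasurable[m] g μ) :
    ∫ ω, f ω • g ω ∂μ = ∫ ω, μ[f | m] ω • g ω ∂μ := by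
  rw [← integral_condExp hm]
  exact integral_congr_ae (condExp_smul_of_aestronglyMeasurable_right hf hfg hg)

end

theorem integral_snd_smul_eq_of_ae_eq_condExp {X E : Type*} [MeasurableSpace X]
    [NormedAddCommGroup E] [NormedSpace ℝ E] [CompleteSpace E] {p : Measure (X × ℝ)}
    [IsFiniteMeasure p] {g : X → E} {μ' : X → ℝ}
    (hy : Integrable (fun z : X × ℝ => z.2) p) (hg : StronglyMeasurable g)
    (hyg : Integrable (fun z : X × ℝ => z.2 • g z.1) p)
    (hμ' : (fun z : X × ℝ => μ' z.1) =ᵐ[p]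
      p[(fun z : X × ℝ => z.2) | MeasurableSpace.comap Prod.fst inferInstance]) :
    ∫ z, z.2 • g z.1 ∂p = ∫ z, μ' z.1 • g z.1 ∂p := by
  rw [integral_smul_eq_integral_condExp_smul measurable_fst.comap_le hy hyg
    (hg.comp_measurable (comap_measurable Prod.fst)).aestronglyMeasurable]
  refine integral_congr_ae ?_
  filter_upwards [hμ'] with z hz
  rw [hz]

section

variable {X H : Type*} [MeasurableSpace X] [NormedAddCommGroup H] [InnerProductSpace ℝ H]
  [MeasurableSpace H] {p : Measure (X × ℝ)} [IsFiniteMeasure p] {π : Measure H}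
  [IsFiniteMeasure π] {Φ : X → H} {ψ : ℝ → ℝ}

theorem integrable_comp_inner_smul
    (hres : Integrable (fun q : H × (X × ℝ) =>
      (ψ ⟪Φ q.2.1, q.1⟫ - q.2.2) • Φ q.2.1) (π.prod p))
    (hyΦ : Integrable (fun z : X × ℝ => z.2 • Φ z.1) p) :
    Integrable (fun q : H × (X × ℝ) => ψ ⟪Φ q.2.1, q.1⟫ • Φ q.2.1) (π.prod p) := by
  refine (hres.add (hyΦ.comp_snd π)).congr (ae_of_all _ fun q => ?_)
  simp only [Pi.add_apply, sub_smul, sub_add_cancel]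

theorem integral_residual_smul_eq_sub [CompleteSpace H] [IsProbabilityMeasure π]
    (hres : Integrable (fun q : H × (X × ℝ) =>
      (ψ ⟪Φ q.2.1, q.1⟫ - q.2.2) • Φ q.2.1) (π.prod p))
    (hyΦ : Integrable (fun z : X × ℝ => z.2 • Φ z.1) p) :
    ∫ q, (ψ ⟪Φ q.2.1, q.1⟫ - q.2.2) • Φ q.2.1 ∂(π.prod p) =
      ∫ z, (∫ θ, ψ ⟪Φ z.1, θ⟫ ∂π) • Φ z.1 ∂p -
        ∫ z, z.2 • Φ z.1 ∂p := by
  have hψΦ := integrable_comp_inner_smul hres hyΦ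
  simp only [sub_smul]
  rw [integral_sub hψΦ (hyΦ.comp_snd π), integral_prod_symm _ hψΦ,
    integral_fun_snd (fun z : X × ℝ => z.2 • Φ z.1), probReal_univ, one_smul]
  simp only [integral_smul_const]

end

theorem stationary_averaged_prediction_uncorrelated_with_features_general
    {X : Type*} [MeasurableSpace X] {d : ℕ}
    (p : Measure (X × ℝ)) [IsProbabilityMeasure p]
    (hy : Integrable (fun q : X × ℝ => q.2) p)
    (Φ : X → EuclideanSpace ℝ (Fin d)) (hΦ_meas : Measurable Φ)
    (hΦ_bdd : ∃ C : ℝ, ∀ x, ‖Φ x‖ ≤ C)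
    (a : ℝ → ℝ)
    (γ : ℝ) (hγ : 0 < γ)
    (π : Measure (EuclideanSpace ℝ (Fin d))) [IsProbabilityMeasure π]
    (hmoment : Integrable (fun θ : EuclideanSpace ℝ (Fin d) => θ) π)
    (hgrad_int : Integrable
      (fun q : EuclideanSpace ℝ (Fin d) × (X × ℝ) =>
        (deriv a ⟪Φ q.2.1, q.1⟫ - q.2.2) • Φ q.2.1) (π.prod p))
    (hinv : Measure.map
      (fun q : EuclideanSpace ℝ (Fin d) × (X × ℝ) =>
        q.1 - γ • ((deriv a ⟪Φ q.2.1, q.1⟫ - q.2.2) • Φ q.2.1)) (π.prod p) = π)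
    (μss : X → ℝ) (hμss_meas : Measurable μss)
    (hμss : (fun q : X × ℝ => μss q.1) =ᵐ[p]
      p[(fun q : X × ℝ => q.2) | MeasurableSpace.comap (Prod.fst : X × ℝ → X) inferInstance])
    (b : X → ℝ) (hb : ∀ x, b x = ∫ θ, deriv a ⟪Φ x, θ⟫ ∂π) :
    ∫ x, (b x - μss x) • Φ x ∂(p.map Prod.fst) = 0 := by
  obtain ⟨C, hC⟩ := hΦ_bdd
  have hΦ_fst : Measurable fun z : X × ℝ => Φ z.1 := hΦ_meas.comp measurable_fst
  have hΦ_bound : ∀ᵐ z ∂p, ‖Φ z.1‖ ≤ C := ae_of_all _ fun z => hC z.1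
  have hyΦ : Integrable (fun z : X × ℝ => z.2 • Φ z.1) p :=
    hy.smul_bdd C hΦ_fst.aestronglyMeasurable hΦ_bound
  have hgrad_zero : ∫ q, (deriv a ⟪Φ q.2.1, q.1⟫ - q.2.2) • Φ q.2.1 ∂(π.prod p) = 0 :=
    integral_eq_zero_of_map_sub_smul_eq hγ.ne' (hmoment.comp_fst p) hgrad_int
      (by rw [hinv, Measure.map_fst_prod, measure_univ, one_smul])
  have hbΦ_int : Integrable (fun z : X × ℝ => b z.1 • Φ z.1) p := by
    simpa only [integral_smul_const, ← hb] using
      (integrable_comp_inner_smul hgrad_int hyΦ).integral_prod_right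
  have hμssΦ_int : Integrable (fun z : X × ℝ => μss z.1 • Φ z.1) p :=
    (integrable_condExp.congr hμss.symm).smul_bdd C hΦ_fst.aestronglyMeasurable hΦ_bound
  have hyΦ_eq : ∫ z, z.2 • Φ z.1 ∂p = ∫ z, μss z.1 • Φ z.1 ∂p :=
    integral_snd_smul_eq_of_ae_eq_condExp hy hΦ_meas.stronglyMeasurable hyΦ hμss
  have hb_meas : Measurable b := by
    rw [funext hb]
    exact ((measurable_deriv a).comp ((hΦ_meas.comp measurable_fst).inner
      measurable_snd)).stronglyMeasurable.integral_prod_right'.measurable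
  calc ∫ x, (b x - μss x) • Φ x ∂(p.map Prod.fst)
      = ∫ z, (b z.1 - μss z.1) • Φ z.1 ∂p := integral_map measurable_fst.aemeasurable
        ((hb_meas.sub hμss_meas).smul hΦ_meas).aestronglyMeasurable
    _ = ∫ z, b z.1 • Φ z.1 ∂p - ∫ z, z.2 • Φ z.1 ∂p := by
        simp only [sub_smul]
        rw [integral_sub hbΦ_int hμssΦ_int, hyΦ_eq]
    _ = 0 := by
        simpa only [← hb, integral_residual_smul_eq_sub hgrad_int hyΦ] using hgrad_zero

/-- For constant step-size SGD on a conditional exponential family with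
feature map `Φ`, any invariant probability measure `π` yields an averaged prediction
`b(x) = ∫ a'(⟨Φ(x),θ⟩) dπ(θ)` whose deviation from the optimal prediction
`μ**(x) = E[y|x]` is uncorrelated with the features: `E_{p_x}[(b(x) - μ**(x))Φ(x)] = 0`. -/
theorem stationary_averaged_prediction_uncorrelated_with_features
    {X : Type*} [MeasurableSpace X] {d : ℕ}
    (p : Measure (X × ℝ)) [IsProbabilityMeasure p]
    (hy : Integrable (fun q : X × ℝ => q.2) p)
    (Φ : X → EuclideanSpace ℝ (Fin d)) (hΦ_meas : Measurable Φ)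
    (hΦ_bdd : ∃ C : ℝ, ∀ x, ‖Φ x‖ ≤ C)
    (a : ℝ → ℝ) (ha : ContDiff ℝ 1 a)
    (γ : ℝ) (hγ : 0 < γ)
    (π : Measure (EuclideanSpace ℝ (Fin d))) [IsProbabilityMeasure π]
    (hmoment : Integrable (fun θ : EuclideanSpace ℝ (Fin d) => θ) π)
    (hgrad_int : Integrable
      (fun q : EuclideanSpace ℝ (Fin d) × (X × ℝ) =>
        (deriv a ⟪Φ q.2.1, q.1⟫ - q.2.2) • Φ q.2.1) (π.prod p))
    (hinv : Measure.map
      (fun q : EuclideanSpace ℝ (Fin d) × (X × ℝ) =>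
        q.1 - γ • ((deriv a ⟪Φ q.2.1, q.1⟫ - q.2.2) • Φ q.2.1)) (π.prod p) = π)
    (μss : X → ℝ) (hμss_meas : Measurable μss)
    (hμss : (fun q : X × ℝ => μss q.1) =ᵐ[p]
      p[(fun q : X × ℝ => q.2) | MeasurableSpace.comap (Prod.fst : X × ℝ → X) inferInstance])
    (b : X → ℝ) (hb : ∀ x, b x = ∫ θ, deriv a ⟪Φ x, θ⟫ ∂π) :
    ∫ x, (b x - μss x) • Φ x ∂(p.map Prod.fst) = 0 :=
  stationary_averaged_prediction_uncorrelated_with_features_general p hy Φ hΦ_meas hΦ_bdd a γ hγ π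
    hmoment hgrad_int hinv μss hμss_meas hμss b hb
end

section
/- Let Φ : X → ℝ^d be bounded and measurable, a : ℝ → ℝ continuously differentiable with a' Lipschitz-continuous on bounded sets, and p a probability measure on X × ℝ with E|y| < ∞. Then the expected negative log-likelihood F(θ) = E_p[-y⟨Φ(x),θ⟩ + a(⟨Φ(x),θ⟩)] is differentiable at every θ ∈ ℝ^d with gradient ∇F(θ) = E_p[ (a'(⟨Φ(x),θ⟩) - y) Φ(x) ]. -/
/-!
Differentiate under the integral sign. On the unit ball around `θ` every inner product
`⟪Φ x, θ'⟫` lies in the compact interval `[-R, R]` with `R = C (‖θ‖ + 1)`, where `C` bounds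
`‖Φ‖`; there `a` and `a'` are bounded, by `K` and `M` say. Hence the per-sample loss is
dominated by `R |y| + K` and its derivative `(a'(⟪Φ x, θ'⟫) - y) ⟪Φ x, ·⟫` by `(M + |y|) C`,
both integrable because `E|y| < ∞`.
-/

open MeasureTheory
open scoped RealInnerProductSpace

open InnerProductSpace Metric

section NegLogLik

variable {E : Type*} [NormedAddCommGroup E] [InnerProductSpace ℝ E]

def negLogLik (a : ℝ → ℝ) (φ : E) (y : ℝ) (θ : E) : ℝ := -y * ⟪φ, θ⟫ + a ⟪φ, θ⟫

theorem hasFDerivAt_negLogLik [CompleteSpace E] {a : ℝ → ℝ} {φ θ : E} (y : ℝ)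
    (ha : DifferentiableAt ℝ a ⟪φ, θ⟫) :
    HasFDerivAt (negLogLik a φ y) (toDual ℝ E ((deriv a ⟪φ, θ⟫ - y) • φ)) θ := by
  have hlin : HasFDerivAt (fun θ' : E => ⟪φ, θ'⟫) (innerSL ℝ φ) θ := (innerSL ℝ φ).hasFDerivAt
  refine ((hlin.const_mul (-y)).add (ha.hasDerivAt.comp_hasFDerivAt θ hlin)).congr_fderiv ?_
  ext v
  simp
  ring

theorem abs_negLogLik_le {a : ℝ → ℝ} {φ θ : E} {y R K : ℝ} (hθ : |⟪φ, θ⟫| ≤ R)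
    (hK : ∀ t ∈ closedBall (0 : ℝ) R, |a t| ≤ K) :
    |negLogLik a φ y θ| ≤ |y| * R + K :=
  calc |negLogLik a φ y θ| ≤ |y| * |⟪φ, θ⟫| + |a ⟪φ, θ⟫| := by
        simpa [negLogLik, abs_mul] using abs_add_le (-y * ⟪φ, θ⟫) (a ⟪φ, θ⟫)
    _ ≤ |y| * R + K := by
        gcongr
        exact hK _ (mem_closedBall_zero_iff.2 hθ)

theorem norm_toDual_smul_le [CompleteSpace E] {φ : E} {c C M : ℝ} (hφ : ‖φ‖ ≤ C)
    (hc : |c| ≤ M) : ‖toDual ℝ E (c • φ)‖ ≤ M * C := by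
  rw [LinearIsometryEquiv.norm_map, norm_smul, Real.norm_eq_abs]
  exact mul_le_mul hc hφ (norm_nonneg _) ((abs_nonneg _).trans hc)

theorem abs_real_inner_le_of_norm_le {φ θ : E} {C r : ℝ} (hφ : ‖φ‖ ≤ C) (hθ : ‖θ‖ ≤ r) :
    |⟪φ, θ⟫| ≤ C * r :=
  (abs_real_inner_le_norm φ θ).trans
    (mul_le_mul hφ hθ (norm_nonneg _) ((norm_nonneg _).trans hφ))

theorem hasGradientAt_integral_negLogLik [CompleteSpace E] {α : Type*} [MeasurableSpace α]
    {μ : Measure α} [IsFiniteMeasure μ] {φ : α → E} {y : α → ℝ} {a : ℝ → ℝ} {C : ℝ}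
    (hφ : AEStronglyMeasurable φ μ) (hφC : ∀ q, ‖φ q‖ ≤ C) (hy : Integrable y μ)
    (ha : ContDiff ℝ 1 a) (θ : E) :
    HasGradientAt (fun θ' => ∫ q, negLogLik a (φ q) (y q) θ' ∂μ)
      (∫ q, (deriv a ⟪φ q, θ⟫ - y q) • φ q ∂μ) θ := by
  set R := C * (‖θ‖ + 1)
  have hR : ∀ q, ∀ θ' ∈ ball θ 1, |⟪φ q, θ'⟫| ≤ R := fun q θ' hθ' =>
    abs_real_inner_le_of_norm_le (hφC q)
      (by linarith [norm_le_norm_add_norm_sub' θ' θ, mem_ball_iff_norm.1 hθ'])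
  obtain ⟨K, hK⟩ := (isCompact_closedBall (0 : ℝ) R).exists_bound_of_continuousOn
    ha.continuous.continuousOn
  obtain ⟨M, hM⟩ := (isCompact_closedBall (0 : ℝ) R).exists_bound_of_continuousOn
    (ha.continuous_deriv le_rfl).continuousOn
  have hinner : ∀ θ', AEStronglyMeasurable (fun q => ⟪φ q, θ'⟫) μ := fun θ' =>
    hφ.inner aestronglyMeasurable_const
  have hmeas : ∀ θ', AEStronglyMeasurable (fun q => negLogLik a (φ q) (y q) θ') μ := fun θ' =>
    (hy.1.neg.mul (hinner θ')).add (ha.continuous.comp_aestronglyMeasurable (hinner θ'))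
  have hint : Integrable (fun q => negLogLik a (φ q) (y q) θ) μ :=
    ((hy.abs.mul_const R).add (integrable_const K)).mono' (hmeas θ) (ae_of_all _ fun q =>
      abs_negLogLik_le (hR q θ (mem_ball_self one_pos)) hK)
  have hderiv_meas : AEStronglyMeasurable
      (fun q => toDual ℝ E ((deriv a ⟪φ q, θ⟫ - y q) • φ q)) μ :=
    (toDual ℝ E).continuous.comp_aestronglyMeasurable
      ((((ha.continuous_deriv le_rfl).comp_aestronglyMeasurable (hinner θ)).sub hy.1).smul hφ)
  have hderiv_le : ∀ q, ∀ θ' ∈ ball θ 1,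
      ‖toDual ℝ E ((deriv a ⟪φ q, θ'⟫ - y q) • φ q)‖ ≤ (M + |y q|) * C := fun q θ' hθ' =>
    norm_toDual_smul_le (hφC q) ((abs_sub _ _).trans
      (add_le_add (hM _ (mem_closedBall_zero_iff.2 (hR q θ' hθ'))) le_rfl))
  have hcomm : toDual ℝ E (∫ q, (deriv a ⟪φ q, θ⟫ - y q) • φ q ∂μ) =
      ∫ q, toDual ℝ E ((deriv a ⟪φ q, θ⟫ - y q) • φ q) ∂μ :=
    ((toDual ℝ E).toContinuousLinearEquiv.integral_comp_comm _).symm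
  rw [hasGradientAt_iff_hasFDerivAt, hcomm]
  exact hasFDerivAt_integral_of_dominated_of_fderiv_le (ball_mem_nhds θ one_pos)
    (Filter.Eventually.of_forall hmeas) hint hderiv_meas (ae_of_all _ hderiv_le)
    (((integrable_const M).add hy.abs).mul_const C)
    (ae_of_all _ fun q θ' _ => hasFDerivAt_negLogLik (y q) (ha.differentiable one_ne_zero _))

end NegLogLik

theorem expected_nll_has_gradient_general
    {X : Type*} [MeasurableSpace X] {d : ℕ}
    (p : Measure (X × ℝ)) [IsProbabilityMeasure p]
    (hy : Integrable (fun q : X × ℝ => q.2) p)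
    (Φ : X → EuclideanSpace ℝ (Fin d)) (hΦ_meas : Measurable Φ)
    (hΦ_bdd : ∃ C : ℝ, ∀ x, ‖Φ x‖ ≤ C)
    (a : ℝ → ℝ) (ha : ContDiff ℝ 1 a) :
    ∀ θ : EuclideanSpace ℝ (Fin d),
      HasGradientAt
        (fun θ' : EuclideanSpace ℝ (Fin d) =>
          ∫ q, (-q.2 * ⟪Φ q.1, θ'⟫ + a ⟪Φ q.1, θ'⟫) ∂p)
        (∫ q, (deriv a ⟪Φ q.1, θ⟫ - q.2) • Φ q.1 ∂p) θ := by
  obtain ⟨C, hC⟩ := hΦ_bdd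
  exact hasGradientAt_integral_negLogLik (hΦ_meas.comp measurable_fst).aestronglyMeasurable
    (fun q => hC q.1) hy ha

/-- The expected negative log-likelihood
`F(θ) = E_p[-y⟨Φ(x),θ⟩ + a(⟨Φ(x),θ⟩)]` of a conditional exponential family with bounded
features and `a` of class `C¹` with locally Lipschitz derivative is differentiable, with
gradient `∇F(θ) = E_p[(a'(⟨Φ(x),θ⟩) - y)Φ(x)]`. -/
theorem expected_nll_has_gradient
    {X : Type*} [MeasurableSpace X] {d : ℕ}
    (p : Measure (X × ℝ)) [IsProbabilityMeasure p]
    (hy : Integrable (fun q : X × ℝ => q.2) p)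
    (Φ : X → EuclideanSpace ℝ (Fin d)) (hΦ_meas : Measurable Φ)
    (hΦ_bdd : ∃ C : ℝ, ∀ x, ‖Φ x‖ ≤ C)
    (a : ℝ → ℝ) (ha : ContDiff ℝ 1 a)
    (ha'_lip : ∀ R : ℝ, 0 < R → ∃ L : NNReal,
      LipschitzOnWith L (deriv a) (Metric.closedBall (0 : ℝ) R)) :
    ∀ θ : EuclideanSpace ℝ (Fin d),
      HasGradientAt
        (fun θ' : EuclideanSpace ℝ (Fin d) =>
          ∫ q, (-q.2 * ⟪Φ q.1, θ'⟫ + a ⟪Φ q.1, θ'⟫) ∂p)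
        (∫ q, (deriv a ⟪Φ q.1, θ⟫ - q.2) • Φ q.1 ∂p) θ :=
  expected_nll_has_gradient_general p hy Φ hΦ_meas hΦ_bdd a ha
end
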